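/- arXiv:1403.5232 — 3 statements merged into one kernel-verified Lean document; each statement's English description precedes it below -/
import Mathlib

section
/- (Chu–Vandermonde, Pochhammer form) For any natural number n and elements a, c of a commutative ℚ-algebra such that (c)_n is invertible, Σ_{k=0}^{n} (−n)_k (a)_k / ((c)_k k!) = (c−a)_n / (c)_n. -/
open Finset Polynomial

/-!
Multiplying by `(c)_n` and using `(-n)_k = (-1)^k k! C(n,k)` and `(c)_n = (c)_k (c+k)_{n-k}`, the
identity becomes `∑ (-1)^k C(n,k) (a)_k (c+k)_{n-k} = (c-a)_n`. Rewriting rising factorials as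
falling ones, this is Vandermonde's convolution
`(x+y)^{\underline n} = ∑ C(n,k) x^{\underline k} y^{\underline{n-k}}` at `x = -a`, `y = c+n-1`.
-/

theorem descPochhammer_eval_add {R : Type*} [Ring R] {x y : R} (h : Commute x y) (n : ℕ) :
    (descPochhammer R n).eval (x + y) = ∑ ij ∈ antidiagonal n,
      n.choose ij.1 * ((descPochhammer R ij.1).eval x * (descPochhammer R ij.2).eval y) := by
  simp only [← descPochhammer_map (algebraMap ℤ R), eval_map_algebraMap, aeval_eq_smeval]
  exact Ring.descPochhammer_smeval_add n h

theorem descPochhammer_eval_neg {R : Type*} [Ring R] (r : R) (k : ℕ) :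
    (descPochhammer R k).eval (-r) = (-1) ^ k * (ascPochhammer R k).eval r := by
  rw [← neg_neg r, ascPochhammer_eval_neg_eq_descPochhammer, neg_neg, ← mul_assoc, ← pow_add,
    ← two_mul, pow_mul, neg_one_sq, one_pow, one_mul]

theorem ascPochhammer_eval_sub_eq_sum {R : Type*} [CommRing R] (a c : R) (n : ℕ) :
    (ascPochhammer R n).eval (c - a) = ∑ k ∈ range (n + 1),
      (-1) ^ k * n.choose k * (ascPochhammer R k).eval a *
        (ascPochhammer R (n - k)).eval (c + k) := by
  have hfalling :
      (ascPochhammer R n).eval (c - a) = (descPochhammer R n).eval (-a + (c + n - 1)) := by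
    rw [descPochhammer_eval_eq_ascPochhammer]
    ring_nf
  rw [hfalling, descPochhammer_eval_add (Commute.all _ _),
    Nat.sum_antidiagonal_eq_sum_range_succ_mk]
  refine sum_congr rfl fun k hk => ?_
  rw [descPochhammer_eval_neg, descPochhammer_eval_eq_ascPochhammer,
    Nat.cast_sub (Nat.le_of_lt_succ (mem_range.mp hk))]
  ring_nf

theorem ascPochhammer_eval_mul_eval_add {R : Type*} [CommSemiring R] (r : R) (m n : ℕ) :
    (ascPochhammer R m).eval r * (ascPochhammer R n).eval (r + m) =
      (ascPochhammer R (m + n)).eval r := by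
  rw [← ascPochhammer_mul, eval_mul, eval_comp]
  simp

theorem ascPochhammer_eval_neg_natCast {R : Type*} [Ring R] (n k : ℕ) :
    (ascPochhammer R k).eval (-(n : R)) = (-1) ^ k * (k.factorial * n.choose k : ℕ) := by
  rw [ascPochhammer_eval_neg_eq_descPochhammer, descPochhammer_eval_eq_descFactorial,
    Nat.descFactorial_eq_factorial_mul_choose]

/-- Chu–Vandermonde in Pochhammer form: in a commutative `ℚ`-algebra with all
`(c)_k`, `k ≤ n`, invertible, `∑_{k=0}^n (-n)_k (a)_k / ((c)_k k!) = (c-a)_n / (c)_n`. -/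
theorem chu_vandermonde_pochhammer (A : Type*) [CommRing A] [Algebra ℚ A]
    (a c : A) (n : ℕ) (hc : ∀ k ≤ n, IsUnit ((ascPochhammer A k).eval c)) :
    (∑ k ∈ Finset.range (n + 1),
        (ascPochhammer A k).eval (-(n : A)) * (ascPochhammer A k).eval a *
          Ring.inverse ((ascPochhammer A k).eval c * (k.factorial : A))) =
      (ascPochhammer A n).eval (c - a) * Ring.inverse ((ascPochhammer A n).eval c) := by
  have hcn := hc n le_rfl
  apply hcn.mul_right_cancel
  rw [Ring.inverse_mul_cancel_right _ _ hcn, sum_mul, ascPochhammer_eval_sub_eq_sum a c n]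
  refine sum_congr rfl fun k hk => ?_
  have hkn : k ≤ n := Nat.le_of_lt_succ (mem_range.mp hk)
  set u := (ascPochhammer A k).eval c * (k.factorial : A)
  have hu : IsUnit u := (hc k hkn).mul (IsUnit.natCast_factorial_of_algebra ℚ k)
  have hsplit : (ascPochhammer A n).eval c =
      (ascPochhammer A k).eval c * (ascPochhammer A (n - k)).eval (c + k) := by
    rw [ascPochhammer_eval_mul_eval_add, Nat.add_sub_cancel' hkn]
  calc (ascPochhammer A k).eval (-(n : A)) * (ascPochhammer A k).eval a * Ring.inverse u *
        (ascPochhammer A n).eval c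
      = (-1) ^ k * n.choose k * (ascPochhammer A k).eval a *
          (ascPochhammer A (n - k)).eval (c + k) * (Ring.inverse u * u) := by
        rw [ascPochhammer_eval_neg_natCast, hsplit]
        push_cast
        ring
    _ = _ := by rw [Ring.inverse_mul_cancel _ hu, mul_one]
end

section
/- For a prime p ≥ 5 and integers k with 1 ≤ k ≤ (p−1)/2 and any integer M, the congruence ((1−Mp)/2)_k ≡ (1/2)_k · (1 − Mp·A_k + M²p²·B_k) (mod p³) holds in Z_p, where A_k = Σ_{j=0}^{k−1} 1/(2j+1) and B_k = Σ_{0≤i<j≤k−1} 1/((2i+1)(2j+1)). -/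
/-!
With `x_j = Mp/(2j+1)`, the `j`-th factor of `((1-Mp)/2)_k` is `(1/2 + j)(1 - x_j)`, so
`((1-Mp)/2)_k = (1/2)_k ∏_{j<k} (1 - x_j)`, and `1 - Mp A_k + M²p² B_k` is the expansion of that
product to second order in the `x_j`. As `2j+1 < p`, each `x_j` has norm at most `p⁻¹`, so by the
ultrametric inequality the remaining terms, of order at least three, have norm at most `p⁻³`;
finally `(1/2)_k` is a `p`-adic integer because `2` is a unit.
-/

open Finset

lemma ascPochhammer_eval_eq_prod_range {S : Type*} [CommSemiring S] (k : ℕ) (x : S) :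
    (ascPochhammer S k).eval x = ∏ j ∈ range k, (x + j) := by
  induction k with
  | zero => simp
  | succ n ih => rw [ascPochhammer_succ_eval, ih, prod_range_succ]

lemma ascPochhammer_eval_sub_div_two {K : Type*} [Field K] (h2 : (2 : K) ≠ 0) {k : ℕ}
    (hodd : ∀ j < k, 2 * (j : K) + 1 ≠ 0) (t : K) :
    (ascPochhammer K k).eval ((1 - t) / 2) =
      (ascPochhammer K k).eval (1 / 2) * ∏ j ∈ range k, (1 - t * (2 * (j : K) + 1)⁻¹) := by
  simp only [ascPochhammer_eval_eq_prod_range, ← prod_mul_distrib]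
  refine prod_congr rfl fun j hj => ?_
  field_simp [hodd j (mem_range.mp hj)]
  ring

section Ultrametric

variable {R : Type*} [SeminormedCommRing R] [IsUltrametricDist R]

lemma norm_ascPochhammer_eval_le_one [NormOneClass R] {x : R} (hx : ‖x‖ ≤ 1) (k : ℕ) :
    ‖(ascPochhammer R k).eval x‖ ≤ 1 := by
  induction k with
  | zero => simp
  | succ n ih =>
    rw [ascPochhammer_succ_eval]
    refine (norm_mul_le _ _).trans (mul_le_one₀ ih (norm_nonneg _) ?_)
    exact (IsUltrametricDist.norm_add_le_max _ _).trans
      (max_le hx (IsUltrametricDist.norm_natCast_le_one R n))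

lemma norm_sum_range_sum_range_mul_le_sq {x : ℕ → R} {ε : ℝ} {n : ℕ} (hε : 0 ≤ ε)
    (hx : ∀ j < n, ‖x j‖ ≤ ε) :
    ‖∑ j ∈ range n, ∑ i ∈ range j, x i * x j‖ ≤ ε ^ 2 := by
  refine IsUltrametricDist.norm_sum_le_of_forall_le_of_nonneg (by positivity) fun j hj => ?_
  refine IsUltrametricDist.norm_sum_le_of_forall_le_of_nonneg (by positivity) fun i hi => ?_
  rw [mem_range] at hi hj
  calc ‖x i * x j‖ ≤ ‖x i‖ * ‖x j‖ := norm_mul_le _ _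
    _ ≤ ε * ε := mul_le_mul (hx i (by omega)) (hx j hj) (norm_nonneg _) hε
    _ = ε ^ 2 := (sq ε).symm

lemma norm_prod_one_sub_sub_second_order_le [NormOneClass R] {x : ℕ → R} {ε : ℝ} {k : ℕ}
    (hε0 : 0 ≤ ε) (hε1 : ε ≤ 1) (hx : ∀ j < k, ‖x j‖ ≤ ε) :
    ‖∏ j ∈ range k, (1 - x j) -
        (1 - ∑ j ∈ range k, x j + ∑ j ∈ range k, ∑ i ∈ range j, x i * x j)‖ ≤ ε ^ 3 := by
  induction k with
  | zero => simpa using pow_nonneg hε0 3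
  | succ n ih =>
    have hxn : ‖x n‖ ≤ ε := hx n n.lt_succ_self
    set P := ∏ j ∈ range n, (1 - x j)
    set S := ∑ j ∈ range n, x j
    set Q := ∑ j ∈ range n, ∑ i ∈ range j, x i * x j
    have hQ : ‖Q‖ ≤ ε ^ 2 := norm_sum_range_sum_range_mul_le_sq hε0 fun j hj => hx j (by omega)
    have hrec : ∏ j ∈ range (n + 1), (1 - x j) -
        (1 - ∑ j ∈ range (n + 1), x j + ∑ j ∈ range (n + 1), ∑ i ∈ range j, x i * x j) =
        (P - (1 - S + Q)) * (1 - x n) + -(Q * x n) := by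
      rw [prod_range_succ, sum_range_succ, sum_range_succ, ← sum_mul]
      ring
    have hfactor : ‖1 - x n‖ ≤ 1 := by
      simpa [sub_eq_add_neg] using (IsUltrametricDist.norm_add_le_max (1 : R) (-x n)).trans
        (max_le norm_one.le ((norm_neg (x n)).trans_le (hxn.trans hε1)))
    rw [hrec]
    refine (IsUltrametricDist.norm_add_le_max _ _).trans (max_le ?_ ?_)
    · calc ‖(P - (1 - S + Q)) * (1 - x n)‖ ≤ ε ^ 3 * 1 :=
            (norm_mul_le _ _).trans (mul_le_mul (ih fun j hj => hx j (by omega)) hfactor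
              (norm_nonneg _) (by positivity))
        _ = ε ^ 3 := mul_one _
    · calc ‖-(Q * x n)‖ ≤ ε ^ 2 * ε := (norm_neg _).trans_le <|
            (norm_mul_le _ _).trans (mul_le_mul hQ hxn (norm_nonneg _) (by positivity))
        _ = ε ^ 3 := by ring

end Ultrametric

lemma Padic.norm_natCast_eq_one_of_pos_of_lt {p : ℕ} [Fact p.Prime] {n : ℕ} (hn0 : 0 < n)
    (hnp : n < p) : ‖(n : ℚ_[p])‖ = 1 :=
  Padic.norm_natCast_eq_one_iff.mpr (Nat.coprime_of_lt_prime hn0.ne' hnp Fact.out)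

theorem pochhammer_half_perturbation_general (p : ℕ) [Fact p.Prime]
    (M : ℤ) (k : ℕ) (hk1 : 1 ≤ k) (hk2 : k ≤ (p - 1) / 2) :
    ‖(ascPochhammer ℚ_[p] k).eval ((1 - (M : ℚ_[p]) * p) / 2) -
        (ascPochhammer ℚ_[p] k).eval (1 / 2) *
          (1 - (M : ℚ_[p]) * p * (∑ j ∈ Finset.range k, (2 * (j : ℚ_[p]) + 1)⁻¹) +
            (M : ℚ_[p]) ^ 2 * (p : ℚ_[p]) ^ 2 *
              (∑ j ∈ Finset.range k, ∑ i ∈ Finset.range j,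
                ((2 * (i : ℚ_[p]) + 1) * (2 * (j : ℚ_[p]) + 1))⁻¹))‖
      ≤ (p : ℝ) ^ (-3 : ℤ) := by
  have htwo : ‖(2 : ℚ_[p])‖ = 1 := by
    exact_mod_cast Padic.norm_natCast_eq_one_of_pos_of_lt (p := p) (n := 2) (by omega) (by omega)
  have hodd_unit : ∀ j < k, ‖2 * (j : ℚ_[p]) + 1‖ = 1 := fun j hj => by
    exact_mod_cast Padic.norm_natCast_eq_one_of_pos_of_lt (p := p) (n := 2 * j + 1) (by omega)
      (by omega)
  set x : ℕ → ℚ_[p] := fun j => M * p * (2 * (j : ℚ_[p]) + 1)⁻¹ with hx_def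
  have hx : ∀ j < k, ‖x j‖ ≤ (p : ℝ)⁻¹ := fun j hj => by
    rw [hx_def, norm_mul, norm_mul, norm_inv, hodd_unit j hj, Padic.norm_p, inv_one, mul_one]
    exact mul_le_of_le_one_left (by positivity) (Padic.norm_int_le_one M)
  have hexpand : 1 - (M : ℚ_[p]) * p * (∑ j ∈ Finset.range k, (2 * (j : ℚ_[p]) + 1)⁻¹) +
        (M : ℚ_[p]) ^ 2 * (p : ℚ_[p]) ^ 2 * (∑ j ∈ Finset.range k, ∑ i ∈ Finset.range j,
          ((2 * (i : ℚ_[p]) + 1) * (2 * (j : ℚ_[p]) + 1))⁻¹) =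
      1 - ∑ j ∈ range k, x j + ∑ j ∈ range k, ∑ i ∈ range j, x i * x j := by
    simp only [hx_def, mul_sum, mul_inv]
    congr 1
    exact sum_congr rfl fun j _ => sum_congr rfl fun i _ => by ring
  have hε1 : (p : ℝ)⁻¹ ≤ 1 := inv_le_one_of_one_le₀ (mod_cast (Fact.out : p.Prime).one_le)
  rw [ascPochhammer_eval_sub_div_two (norm_ne_zero_iff.mp (by simp [htwo]))
    (fun j hj => norm_ne_zero_iff.mp (by simp [hodd_unit j hj])), hexpand, ← mul_sub, norm_mul]
  calc _ ≤ 1 * ((p : ℝ)⁻¹) ^ 3 :=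
        mul_le_mul (norm_ascPochhammer_eval_le_one (by simp [htwo]) k)
          (norm_prod_one_sub_sub_second_order_le (by positivity) hε1 hx) (norm_nonneg _) zero_le_one
    _ = (p : ℝ) ^ (-3 : ℤ) := by simp [zpow_neg, inv_pow]

/-- For `p ≥ 5` prime, `1 ≤ k ≤ (p-1)/2` and `M ∈ ℤ`,
`((1-Mp)/2)_k ≡ (1/2)_k (1 - Mp A_k + M²p² B_k) (mod p³)` where
`A_k = ∑_{j<k} 1/(2j+1)` and `B_k = ∑_{i<j<k} 1/((2i+1)(2j+1))`. -/
theorem pochhammer_half_perturbation (p : ℕ) [Fact p.Prime] (hp : 5 ≤ p)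
    (M : ℤ) (k : ℕ) (hk1 : 1 ≤ k) (hk2 : k ≤ (p - 1) / 2) :
    ‖(ascPochhammer ℚ_[p] k).eval ((1 - (M : ℚ_[p]) * p) / 2) -
        (ascPochhammer ℚ_[p] k).eval (1 / 2) *
          (1 - (M : ℚ_[p]) * p * (∑ j ∈ Finset.range k, (2 * (j : ℚ_[p]) + 1)⁻¹) +
            (M : ℚ_[p]) ^ 2 * (p : ℚ_[p]) ^ 2 *
              (∑ j ∈ Finset.range k, ∑ i ∈ Finset.range j,
                ((2 * (i : ℚ_[p]) + 1) * (2 * (j : ℚ_[p]) + 1))⁻¹))‖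
      ≤ (p : ℝ) ^ (-3 : ℤ) :=
  pochhammer_half_perturbation_general p M k hk1 hk2
end

section
/- (Kazandzidis-type consequence) For p ≥ 5 prime and r ≥ 1, binomial(2p^r, p^r) ≡ binomial(2p^{r−1}, p^{r−1}) (mod p^{3r}). -/
/-!
Put `N = p ^ r` and `M = p ^ (r - 1)`. Sorting the factors of `(2N)! / N!` and of `N!` by
divisibility by `p` gives `C(2N, N) * ∏ k = C(2M, M) * ∏ (N + k)`, both products over the
`k ∈ (0, N]` prime to `p`, so it suffices that `∏ (1 + N / k) ≡ 1 (mod p ^ (3r))`. As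
`N ^ 3 ≡ 0`, this product is `1 + N e₁ + N ^ 2 e₂` with `e₁ = ∑ 1 / k` and
`2 e₂ = e₁ ^ 2 - ∑ 1 / k ^ 2`. Since the inverses `1 / k` run over all units mod `p ^ r`, and
scaling by `2` multiplies `∑ u ^ 2` by `4`, the sum `∑ 1 / k ^ 2` vanishes mod `p ^ r` (here
`p ≠ 2, 3`). Pairing `k` with `N - k` gives `2 N e₁ ≡ -N ^ 2 ∑ 1 / k ^ 2 ≡ 0 (mod p ^ (3r))`.
-/

open Finset Nat

namespace Kazandzidis

theorem prod_one_add_mul_eq_one_of_pow_three_eq_zero {R ι : Type*} [CommRing R] {x : R}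
    (hx : x ^ 3 = 0) (h2 : IsUnit (2 : R)) (s : Finset ι) (a : ι → R)
    (h1 : x * ∑ i ∈ s, a i = 0) (hsq : x ^ 2 * ∑ i ∈ s, a i ^ 2 = 0) :
    ∏ i ∈ s, (1 + x * a i) = 1 := by
  have hexpand : ∀ t : Finset ι, 2 * ∏ i ∈ t, (1 + x * a i)
      = 2 + 2 * x * ∑ i ∈ t, a i + x ^ 2 * ((∑ i ∈ t, a i) ^ 2 - ∑ i ∈ t, a i ^ 2) := by
    intro t
    induction t using Finset.cons_induction with
    | empty => simp
    | cons b t _ ih =>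
      rw [prod_cons, sum_cons, sum_cons]
      linear_combination
        (1 + x * a b) * ih + (a b * ((∑ i ∈ t, a i) ^ 2 - ∑ i ∈ t, a i ^ 2)) * hx
  refine h2.mul_left_cancel ?_
  linear_combination hexpand s + (2 + x * ∑ i ∈ s, a i) * h1 - hsq

theorem mul_inv_add_inv_eq_neg {R : Type*} [CommRing R] {x a b a' b' : R} (hx : x ^ 3 = 0)
    (hab : a + b = x) (ha : a * a' = 1) (hb : b * b' = 1) :
    x * (a' + b') = -(x ^ 2 * a' ^ 2) := by
  linear_combination (x + x ^ 2 * a') * (a' * b' * hab - a' * hb - b' * ha) + a' ^ 2 * b' * hx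

theorem sum_units_pow_eq_zero {R : Type*} [CommRing R] [Fintype Rˣ] (c : Rˣ) (n : ℕ)
    (hc : IsUnit ((c : R) ^ n - 1)) : ∑ u : Rˣ, (u : R) ^ n = 0 := by
  have hinv : ∑ u : Rˣ, ((c * u : Rˣ) : R) ^ n = ∑ u : Rˣ, (u : R) ^ n :=
    Fintype.sum_equiv (Equiv.mulLeft c) _ _ fun _ => rfl
  simp only [Units.val_mul, mul_pow, ← mul_sum] at hinv
  exact hc.mul_left_cancel (by linear_combination hinv)

def nonMultiples (p n : ℕ) : Finset ℕ := {k ∈ Ioc 0 n | ¬ p ∣ k}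

@[simp] theorem mem_nonMultiples {p n k : ℕ} :
    k ∈ nonMultiples p n ↔ (0 < k ∧ k ≤ n) ∧ ¬ p ∣ k := by
  simp [nonMultiples]

theorem sub_mem_nonMultiples {p n k : ℕ} (hpn : p ∣ n) (hk : k ∈ nonMultiples p n) :
    n - k ∈ nonMultiples p n := by
  obtain ⟨⟨hk0, hkn⟩, hpk⟩ := mem_nonMultiples.mp hk
  have hkn' : k ≠ n := fun h => hpk (h ▸ hpn)
  refine mem_nonMultiples.mpr ⟨⟨by omega, by omega⟩, fun h => hpk ?_⟩
  simpa [Nat.sub_sub_self hkn] using Nat.dvd_sub hpn h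

theorem sum_nonMultiples_reflect {M : Type*} [AddCommMonoid M] {p n : ℕ} (hpn : p ∣ n)
    (f : ℕ → M) : ∑ k ∈ nonMultiples p n, f (n - k) = ∑ k ∈ nonMultiples p n, f k := by
  refine sum_nbij' (n - ·) (n - ·) (fun k hk => sub_mem_nonMultiples hpn hk)
    (fun k hk => sub_mem_nonMultiples hpn hk) (fun k hk => ?_) (fun k hk => ?_) fun _ _ => rfl
  all_goals
    have := (mem_nonMultiples.mp hk).1.2
    omega

theorem coprime_pow_of_mem_nonMultiples {p n k : ℕ} (hp : p.Prime) (hk : k ∈ nonMultiples p n)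
    (j : ℕ) : k.Coprime (p ^ j) :=
  ((hp.coprime_iff_not_dvd.mpr (mem_nonMultiples.mp hk).2).symm).pow_right j

theorem prod_Ioc_eq_prod_nonMultiples_mul {M : Type*} [CommMonoid M] {p : ℕ} (hp : 0 < p)
    (m : ℕ) (f : ℕ → M) :
    ∏ k ∈ Ioc 0 (p * m), f k
      = (∏ k ∈ nonMultiples p (p * m), f k) * ∏ j ∈ Ioc 0 m, f (p * j) := by
  have hmultiples : {k ∈ Ioc 0 (p * m) | p ∣ k} = (Ioc 0 m).image (p * ·) := by
    ext k
    simp only [mem_filter, mem_Ioc, mem_image]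
    constructor
    · rintro ⟨⟨hk0, hkm⟩, j, rfl⟩
      exact ⟨j, ⟨Nat.pos_of_mul_pos_left hk0, Nat.le_of_mul_le_mul_left hkm hp⟩, rfl⟩
    · rintro ⟨j, ⟨hj0, hjm⟩, rfl⟩
      exact ⟨⟨Nat.mul_pos hp hj0, Nat.mul_le_mul_left p hjm⟩, dvd_mul_right p j⟩
  rw [← prod_filter_not_mul_prod_filter _ (p ∣ ·), hmultiples,
    prod_image fun i _ j _ h => Nat.eq_of_mul_eq_mul_left hp h]
  rfl

theorem prod_Ioc_id_eq_factorial (n : ℕ) : ∏ k ∈ Ioc 0 n, k = n ! := by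
  rw [← Ico_add_one_add_one_eq_Ioc, zero_add, prod_Ico_id_eq_factorial]

theorem choose_mul_factorial_eq_prod_Ioc (n : ℕ) :
    (2 * n).choose n * n ! = ∏ k ∈ Ioc 0 n, (n + k) := by
  have hsplit : (2 * n)! = n ! * ∏ k ∈ Ioc 0 n, (n + k) := by
    rw [← prod_Ioc_id_eq_factorial, ← prod_Ioc_id_eq_factorial, two_mul,
      ← prod_Ioc_consecutive _ (Nat.zero_le n) (Nat.le_add_right n n)]
    nth_rw 2 [← add_zero n]
    rw [← image_add_left_Ioc, prod_image fun i _ j _ h => Nat.add_left_cancel h]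
  have h := Nat.choose_mul_factorial_mul_factorial (Nat.le_mul_of_pos_left n two_pos)
  rw [show 2 * n - n = n by omega, hsplit, mul_comm n !] at h
  exact Nat.eq_of_mul_eq_mul_right (Nat.factorial_pos n) h

theorem choose_mul_prod_nonMultiples {p : ℕ} (hp : 0 < p) (m : ℕ) :
    (2 * (p * m)).choose (p * m) * ∏ k ∈ nonMultiples p (p * m), k
      = (2 * m).choose m * ∏ k ∈ nonMultiples p (p * m), (p * m + k) := by
  have hfact : (p * m)! = (∏ k ∈ nonMultiples p (p * m), k) * (p ^ m * m !) := by
    rw [← prod_Ioc_id_eq_factorial, prod_Ioc_eq_prod_nonMultiples_mul hp, prod_mul_distrib,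
      prod_const, Nat.card_Ioc, Nat.sub_zero, prod_Ioc_id_eq_factorial]
  have hshift : ∏ k ∈ Ioc 0 (p * m), (p * m + k)
      = (∏ k ∈ nonMultiples p (p * m), (p * m + k)) * (p ^ m * ((2 * m).choose m * m !)) := by
    simp_rw [prod_Ioc_eq_prod_nonMultiples_mul hp, choose_mul_factorial_eq_prod_Ioc, ← mul_add,
      prod_mul_distrib, prod_const, Nat.card_Ioc, Nat.sub_zero]
  have hpos : 0 < p ^ m * m ! := Nat.mul_pos (Nat.pow_pos hp) (Nat.factorial_pos m)
  apply Nat.eq_of_mul_eq_mul_right hpos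
  calc (2 * (p * m)).choose (p * m) * (∏ k ∈ nonMultiples p (p * m), k) * (p ^ m * m !)
      = ∏ k ∈ Ioc 0 (p * m), (p * m + k) := by
        rw [mul_assoc, ← hfact, choose_mul_factorial_eq_prod_Ioc]
    _ = _ := by rw [hshift]; ring

theorem isUnit_natCast_of_not_dvd {p t k : ℕ} (hp : p.Prime) (hpk : ¬ p ∣ k) :
    IsUnit (k : ZMod (p ^ t)) :=
  (ZMod.isUnit_iff_coprime k _).mpr (((hp.coprime_iff_not_dvd.mpr hpk).symm).pow_right t)

theorem castHom_inv_natCast {m n k : ℕ} (hmn : m ∣ n) (hk : k.Coprime n) :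
    ZMod.castHom hmn (ZMod m) (k : ZMod n)⁻¹ = (k : ZMod m)⁻¹ := by
  refine (ZMod.inv_eq_of_mul_eq_one _ _ _ ?_).symm
  rw [← map_natCast (ZMod.castHom hmn (ZMod m)) k, ← map_mul, ZMod.coe_mul_inv_eq_one k hk,
    map_one]

theorem natCast_mul_eq_zero_of_castHom_eq_zero {m n b : ℕ} (hmn : m ∣ n) (hn : n ∣ m * b)
    {y : ZMod n} (hy : ZMod.castHom hmn (ZMod m) y = 0) : (b : ZMod n) * y = 0 := by
  rw [← ZMod.intCast_zmod_cast y, map_intCast, ZMod.intCast_zmod_eq_zero_iff_dvd] at hy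
  rw [← ZMod.intCast_zmod_cast y, ← Int.cast_natCast, ← Int.cast_mul,
    ZMod.intCast_zmod_eq_zero_iff_dvd, mul_comm]
  exact (Int.natCast_dvd_natCast.mpr hn).trans (by push_cast; exact mul_dvd_mul_right hy _)

theorem sum_nonMultiples_eq_sum_units {M : Type*} [AddCommMonoid M] {p t : ℕ}
    [hp : Fact p.Prime] (ht : t ≠ 0) (f : ZMod (p ^ t) → M) :
    ∑ k ∈ nonMultiples p (p ^ t), f k = ∑ u : (ZMod (p ^ t))ˣ, f u := by
  refine sum_bij' (fun k hk => ZMod.unitOfCoprime k (coprime_pow_of_mem_nonMultiples hp.out hk t))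
    (fun u _ => (u : ZMod (p ^ t)).val) (fun _ _ => mem_univ _) (fun u _ => ?_) (fun k hk => ?_)
    (fun u _ => Units.ext (ZMod.natCast_zmod_val _)) fun k _ => by rw [ZMod.coe_unitOfCoprime]
  · have hcop := (Nat.coprime_pow_right_iff (Nat.pos_of_ne_zero ht) _ p).mp
      (ZMod.val_coe_unit_coprime u)
    refine mem_nonMultiples.mpr ⟨⟨Nat.pos_of_ne_zero fun h => ?_, (ZMod.val_lt _).le⟩,
      hp.out.coprime_iff_not_dvd.mp hcop.symm⟩
    rw [h, Nat.coprime_zero_left] at hcop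
    exact hp.out.ne_one hcop
  · obtain ⟨⟨_, hkn⟩, hpk⟩ := mem_nonMultiples.mp hk
    have hkn' : k ≠ p ^ t := fun h => hpk (h ▸ dvd_pow_self p ht)
    rw [ZMod.coe_unitOfCoprime, ZMod.val_cast_of_lt (by omega)]

theorem sum_inv_sq_nonMultiples {p t : ℕ} [hp : Fact p.Prime] (hp5 : 5 ≤ p) (ht : t ≠ 0) :
    ∑ k ∈ nonMultiples p (p ^ t), ((k : ZMod (p ^ t))⁻¹) ^ 2 = 0 := by
  have not_dvd : ∀ q, q < p → q ≠ 0 → ¬ p ∣ q := fun q hq hq0 h => by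
    have := Nat.le_of_dvd (Nat.pos_of_ne_zero hq0) h; omega
  obtain ⟨two, htwo⟩ :=
    isUnit_natCast_of_not_dvd (t := t) hp.out (not_dvd 2 (by omega) two_ne_zero)
  rw [sum_nonMultiples_eq_sum_units ht fun a => (a⁻¹) ^ 2]
  simp only [ZMod.inv_coe_unit]
  rw [Fintype.sum_equiv (Equiv.inv _) (fun u => ((u⁻¹ : (ZMod (p ^ t))ˣ) : ZMod (p ^ t)) ^ 2)
    (fun u => (u : ZMod (p ^ t)) ^ 2) fun _ => rfl]
  refine sum_units_pow_eq_zero two 2 ?_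
  have h3 : ((2 : ℕ) : ZMod (p ^ t)) ^ 2 - 1 = (3 : ℕ) := by norm_num
  rw [htwo, h3]
  exact isUnit_natCast_of_not_dvd hp.out (not_dvd 3 (by omega) three_ne_zero)

theorem prod_add_nonMultiples_eq_prod {p t : ℕ} [hp : Fact p.Prime] (hp5 : 5 ≤ p)
    (ht : t ≠ 0) :
    ∏ k ∈ nonMultiples p (p ^ t), ((p ^ t + k : ℕ) : ZMod (p ^ (3 * t)))
      = ∏ k ∈ nonMultiples p (p ^ t), (k : ZMod (p ^ (3 * t))) := by
  set S := nonMultiples p (p ^ t)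
  set x : ZMod (p ^ (3 * t)) := (p : ZMod (p ^ (3 * t))) ^ t with hx
  have hx3 : x ^ 3 = 0 := by
    rw [hx, ← pow_mul, mul_comm, ← Nat.cast_pow, ZMod.natCast_self]
  have hinv : ∀ k ∈ S, (k : ZMod (p ^ (3 * t))) * (k : ZMod (p ^ (3 * t)))⁻¹ = 1 := fun k hk =>
    ZMod.coe_mul_inv_eq_one k (coprime_pow_of_mem_nonMultiples hp.out hk _)
  have h2 : IsUnit (2 : ZMod (p ^ (3 * t))) := by
    exact_mod_cast isUnit_natCast_of_not_dvd hp.out fun h => by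
      have := Nat.le_of_dvd two_pos h; omega
  -- `x ^ 2 * y` only depends on `y` modulo `p ^ t`.
  have hsq : x ^ 2 * ∑ k ∈ S, ((k : ZMod (p ^ (3 * t)))⁻¹) ^ 2 = 0 := by
    have hx2 : x ^ 2 = ((p ^ (2 * t) : ℕ) : ZMod (p ^ (3 * t))) := by
      rw [hx]; push_cast; ring
    rw [hx2]
    refine natCast_mul_eq_zero_of_castHom_eq_zero (pow_dvd_pow p (by omega : t ≤ 3 * t))
      (dvd_of_eq (by ring)) ?_
    simp only [map_sum, map_pow]
    rw [sum_congr rfl fun k hk =>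
      by rw [castHom_inv_natCast _ (coprime_pow_of_mem_nonMultiples hp.out hk _)]]
    exact sum_inv_sq_nonMultiples hp5 ht
  have hsum : x * ∑ k ∈ S, (k : ZMod (p ^ (3 * t)))⁻¹ = 0 := by
    have hpair : ∀ k ∈ S,
        x * ((k : ZMod (p ^ (3 * t)))⁻¹ + ((p ^ t - k : ℕ) : ZMod (p ^ (3 * t)))⁻¹)
          = -(x ^ 2 * ((k : ZMod (p ^ (3 * t)))⁻¹) ^ 2) := fun k hk =>
      mul_inv_add_inv_eq_neg hx3
        (by rw [Nat.cast_sub (mem_nonMultiples.mp hk).1.2]; push_cast; ring)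
        (hinv k hk) (hinv _ (sub_mem_nonMultiples (dvd_pow_self p ht) hk))
    refine h2.mul_left_cancel ?_
    calc 2 * (x * ∑ k ∈ S, (k : ZMod (p ^ (3 * t)))⁻¹)
        = x * ∑ k ∈ S,
            ((k : ZMod (p ^ (3 * t)))⁻¹ + ((p ^ t - k : ℕ) : ZMod (p ^ (3 * t)))⁻¹) := by
          rw [sum_add_distrib,
            sum_nonMultiples_reflect (dvd_pow_self p ht) fun k => (k : ZMod (p ^ (3 * t)))⁻¹]
          ring
      _ = -(x ^ 2 * ∑ k ∈ S, ((k : ZMod (p ^ (3 * t)))⁻¹) ^ 2) := by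
          rw [mul_sum, sum_congr rfl hpair, sum_neg_distrib, mul_sum]
      _ = 2 * 0 := by rw [hsq]; ring
  calc ∏ k ∈ S, ((p ^ t + k : ℕ) : ZMod (p ^ (3 * t)))
      = ∏ k ∈ S, (k : ZMod (p ^ (3 * t))) * (1 + x * (k : ZMod (p ^ (3 * t)))⁻¹) :=
        prod_congr rfl fun k hk => by push_cast; linear_combination (-x) * hinv k hk
    _ = ∏ k ∈ S, (k : ZMod (p ^ (3 * t))) := by
        rw [prod_mul_distrib, prod_one_add_mul_eq_one_of_pow_three_eq_zero hx3 h2 S _ hsum hsq,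
          mul_one]

end Kazandzidis

open Kazandzidis in
/-- Kazandzidis-type supercongruence: for `p ≥ 5` prime and `r ≥ 1`,
`C(2p^r, p^r) ≡ C(2p^{r-1}, p^{r-1}) (mod p^{3r})`. -/
theorem kazandzidis_central_binom (p : ℕ) (hp : p.Prime) (hp5 : 5 ≤ p)
    (r : ℕ) (hr : 1 ≤ r) :
    ((p : ℤ) ^ (3 * r)) ∣
      ((Nat.choose (2 * p ^ r) (p ^ r) : ℤ) -
        (Nat.choose (2 * p ^ (r - 1)) (p ^ (r - 1)) : ℤ)) := by
  have : Fact p.Prime := ⟨hp⟩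
  obtain ⟨t, rfl⟩ := Nat.exists_eq_add_of_le' hr
  rw [Nat.add_sub_cancel]
  have hkey := choose_mul_prod_nonMultiples hp.pos (p ^ t)
  rw [show p * p ^ t = p ^ (t + 1) by ring] at hkey
  replace hkey := congrArg (Nat.cast : ℕ → ZMod (p ^ (3 * (t + 1)))) hkey
  rw [Nat.cast_mul, Nat.cast_mul, Nat.cast_prod (fun k => p ^ (t + 1) + k),
    prod_add_nonMultiples_eq_prod hp5 t.succ_ne_zero, ← Nat.cast_prod] at hkey
  have hunit : IsUnit ((∏ k ∈ nonMultiples p (p ^ (t + 1)), k : ℕ) : ZMod (p ^ (3 * (t + 1)))) :=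
    (ZMod.isUnit_iff_coprime _ _).mpr
      (Nat.Coprime.prod_left fun k hk => coprime_pow_of_mem_nonMultiples hp hk _)
  have hcong := hunit.mul_right_cancel hkey
  rw [← Nat.cast_pow, ← ZMod.intCast_eq_intCast_iff_dvd_sub]
  exact_mod_cast hcong.symm
end
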